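/- arXiv:1803.05907 — 4 statements merged into one kernel-verified Lean document; each statement's English description precedes it below -/
import Mathlib

section
/- Let (η(u))_{u∈ℤ} be i.i.d. uniform(0,1). For any ε > 0 and any fixed v ∈ ℤ, the event that v is two-sidedly ε-flat, i.e., that (1/(m+n+1))·∑_{u=v-m}^{v+n} η(u) ∈ [1/2 - ε, 1/2 + ε] for all m, n ≥ 0, has positive probability. -/
open MeasureTheory ProbabilityTheory Set Filter Finset
open scoped Topology

/-!
Write `ξ u = η u - 1/2`. By the strong law of large numbers, applied separately to the variables to
the right and to the left of `v`, almost surely there is a `K` beyond which every block sum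
`∑_{K ≤ k < n} ξ` on either side is at most `ε n / 2` in absolute value, so for some `K` this tail
event `G` has positive probability. `G` depends only on the variables outside `[v - K, v + K]`, so
it is independent of the event `B` that `|ξ u| ≤ ε / 2` for all `u ∈ [v - K, v + K]`, which has
positive probability as a finite intersection of independent events of positive probability. On
`B ∩ G`, a window `[v - m, v + n]` splits into `v` and, on each side, a stretch inside
`[v - K, v + K]` followed by a tail, whence `|∑ ξ| ≤ ε (m + n + 1)`.
-/

theorem Finset.sum_Icc_self_add_nat {M : Type*} [AddCommMonoid M] (x : ℤ → M) (a : ℤ)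
    (n : ℕ) : ∑ u ∈ Icc a (a + n), x u = x a + ∑ k ∈ range n, x (a + 1 + k) := by
  induction n with
  | zero => simp
  | succ n ih =>
    have hnotin : a + n + 1 ∉ Icc a (a + n) := by simp
    rw [Nat.cast_succ, ← add_assoc, ← insert_Icc_right_eq_Icc_add_one (by omega),
      sum_insert hnotin, ih, sum_range_succ]
    rw [show a + 1 + (n : ℤ) = a + n + 1 by ring]
    abel

theorem Finset.sum_Icc_sub_nat {M : Type*} [AddCommMonoid M] (x : ℤ → M) {a b : ℤ}
    (hab : a ≤ b) (m : ℕ) :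
    ∑ u ∈ Icc (a - m) b, x u = ∑ k ∈ range m, x (a - 1 - k) + ∑ u ∈ Icc a b, x u := by
  induction m with
  | zero => simp
  | succ m ih =>
    have hnotin : a - m - 1 ∉ Icc (a - m) b := by simp
    rw [Nat.cast_succ, ← sub_sub, ← insert_Icc_left_eq_Icc_sub_one (by omega),
      sum_insert hnotin, ih, sum_range_succ]
    rw [show a - 1 - (m : ℤ) = a - m - 1 by ring]
    abel

theorem Finset.sum_Icc_sub_add_nat {M : Type*} [AddCommMonoid M] (x : ℤ → M) (v : ℤ)
    (m n : ℕ) :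
    ∑ u ∈ Icc (v - m) (v + n), x u
      = ∑ k ∈ range m, x (v - 1 - k) + x v + ∑ k ∈ range n, x (v + 1 + k) := by
  rw [sum_Icc_sub_nat x (by omega), sum_Icc_self_add_nat, add_assoc]

theorem div_card_mem_Icc_of_abs_sum_sub_le {ι : Type*} {s : Finset ι} (hs : s.Nonempty)
    {x : ι → ℝ} {c ε : ℝ} (h : |∑ i ∈ s, (x i - c)| ≤ ε * #s) :
    (∑ i ∈ s, x i) / #s ∈ Set.Icc (c - ε) (c + ε) := by
  have hcard : (0 : ℝ) < #s := by exact_mod_cast hs.card_pos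
  have hdev : (∑ i ∈ s, x i) / #s - c = (∑ i ∈ s, (x i - c)) / #s := by
    rw [sum_sub_distrib, sum_const, nsmul_eq_mul]
    field_simp
  rw [← Set.mem_Icc_iff_abs_le, abs_sub_comm, hdev, abs_div, Nat.abs_cast, div_le_iff₀ hcard]
  exact h

theorem abs_sum_range_le_of_abs_sum_Ico_le {a : ℕ → ℝ} {δ : ℝ} (hδ : 0 ≤ δ) {K : ℕ}
    (hhead : ∀ k < K, |a k| ≤ δ) (htail : ∀ n, |∑ k ∈ Ico K n, a k| ≤ δ * n) (n : ℕ) :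
    |∑ k ∈ range n, a k| ≤ 2 * δ * n := by
  have hhead_sum : ∀ j ≤ K, |∑ k ∈ range j, a k| ≤ δ * j := fun j hj =>
    calc |∑ k ∈ range j, a k| ≤ ∑ k ∈ range j, |a k| := abs_sum_le_sum_abs _ _
      _ ≤ ∑ k ∈ range j, δ := sum_le_sum fun k hk => hhead k (by simp at hk; omega)
      _ = δ * j := by simp [mul_comm]
  rcases le_or_gt n K with hnK | hKn
  · nlinarith [hhead_sum n hnK, (Nat.cast_nonneg n : (0 : ℝ) ≤ n)]
  · have hKn' : (K : ℝ) ≤ n := by exact_mod_cast hKn.le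
    rw [← sum_range_add_sum_Ico a hKn.le]
    calc _ ≤ |∑ k ∈ range K, a k| + |∑ k ∈ Ico K n, a k| := abs_add_le _ _
      _ ≤ 2 * δ * n := by nlinarith [hhead_sum K le_rfl, htail n]

theorem abs_sum_Icc_le_of_abs_sum_Ico_le {x : ℤ → ℝ} {v : ℤ} {δ : ℝ} {K : ℕ}
    (hcentre : ∀ u ∈ Finset.Icc (v - K) (v + K), |x u| ≤ δ)
    (hleft : ∀ n, |∑ k ∈ Ico K n, x (v - 1 - k)| ≤ δ * n)
    (hright : ∀ n, |∑ k ∈ Ico K n, x (v + 1 + k)| ≤ δ * n) (m n : ℕ) :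
    |∑ u ∈ Icc (v - m) (v + n), x u| ≤ 2 * δ * (m + n + 1) := by
  have hv := hcentre v (mem_Icc.2 ⟨by omega, by omega⟩)
  have hδ : 0 ≤ δ := (abs_nonneg _).trans hv
  have hL := abs_sum_range_le_of_abs_sum_Ico_le hδ
    (fun (k : ℕ) (hk : k < K) => hcentre _ (mem_Icc.2 ⟨by omega, by omega⟩)) hleft m
  have hR := abs_sum_range_le_of_abs_sum_Ico_le hδ
    (fun (k : ℕ) (hk : k < K) => hcentre _ (mem_Icc.2 ⟨by omega, by omega⟩)) hright n
  rw [sum_Icc_sub_add_nat]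
  calc _ ≤ |∑ k ∈ range m, x (v - 1 - k)| + |x v| + |∑ k ∈ range n, x (v + 1 + k)| :=
        abs_add_three _ _ _
    _ ≤ 2 * δ * (m + n + 1) := by nlinarith [abs_nonneg (x v)]

theorem sum_Icc_div_mem_Icc_of_abs_sum_Ico_sub_le {x : ℤ → ℝ} {v : ℤ} {c ε : ℝ} {K : ℕ}
    (hcentre : ∀ u ∈ Finset.Icc (v - K) (v + K), |x u - c| ≤ ε / 2)
    (hleft : ∀ n : ℕ, |∑ k ∈ Ico K n, (x (v - 1 - k) - c)| ≤ ε / 2 * n)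
    (hright : ∀ n : ℕ, |∑ k ∈ Ico K n, (x (v + 1 + k) - c)| ≤ ε / 2 * n) (m n : ℕ) :
    (∑ u ∈ Finset.Icc (v - m) (v + n), x u) / (m + n + 1) ∈ Set.Icc (c - ε) (c + ε) := by
  have hcard : #(Finset.Icc (v - m) (v + n)) = m + n + 1 := by
    rw [Int.card_Icc]
    omega
  have hdev := abs_sum_Icc_le_of_abs_sum_Ico_le (x := fun u => x u - c) hcentre hleft hright m n
  have havg := div_card_mem_Icc_of_abs_sum_sub_le (s := Finset.Icc (v - m) (v + n))
    (Finset.nonempty_Icc.2 (by omega)) (x := x) (c := c) (ε := ε)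
    (by rw [hcard]; push_cast; linarith)
  rwa [hcard, Nat.cast_add_one, Nat.cast_add] at havg

theorem tendsto_sum_range_sub_div {a : ℕ → ℝ} {c : ℝ}
    (h : Tendsto (fun n : ℕ => (∑ k ∈ range n, a k) / n) atTop (𝓝 c)) :
    Tendsto (fun n : ℕ => (∑ k ∈ range n, (a k - c)) / n) atTop (𝓝 0) := by
  have heq : (fun n : ℕ => (∑ k ∈ range n, a k) / n - c)
      =ᶠ[atTop] fun n : ℕ => (∑ k ∈ range n, (a k - c)) / n := by
    filter_upwards [eventually_ne_atTop 0] with n hn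
    rw [sum_sub_distrib, sum_const, card_range, nsmul_eq_mul]
    field_simp
  simpa using (h.sub_const c).congr' heq

theorem eventually_forall_abs_sum_Ico_sub_le {a : ℕ → ℝ} {c δ : ℝ} (hδ : 0 < δ)
    (h : Tendsto (fun n : ℕ => (∑ k ∈ range n, a k) / n) atTop (𝓝 c)) :
    ∀ᶠ K in atTop, ∀ n, |∑ k ∈ Ico K n, (a k - c)| ≤ δ * n := by
  set T : ℕ → ℝ := fun n => ∑ k ∈ range n, (a k - c)
  have hsmall : ∀ᶠ n in atTop, |T n| ≤ δ / 2 * n := by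
    have hpos : |(0 : ℝ)| < δ / 2 := by rw [abs_zero]; exact half_pos hδ
    filter_upwards [(tendsto_sum_range_sub_div h).abs.eventually (ge_mem_nhds hpos)] with n hn
    rw [abs_div, Nat.abs_cast] at hn
    rcases eq_or_ne n 0 with rfl | hn0
    · simp [T]
    · exact (div_le_iff₀ (by positivity)).1 hn
  obtain ⟨N, hN⟩ := eventually_atTop.1 hsmall
  filter_upwards [eventually_ge_atTop N] with K hK n
  rcases le_or_gt n K with hnK | hKn
  · simp only [Finset.Ico_eq_empty_of_le hnK, sum_empty, abs_zero]
    positivity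
  · have hKn' : (K : ℝ) ≤ n := by exact_mod_cast hKn.le
    rw [sum_Ico_eq_sub _ hKn.le]
    calc _ ≤ |T n| + |T K| := abs_sub _ _
      _ ≤ δ * n := by nlinarith [hN n (by omega), hN K hK]

theorem exists_measure_setOf_ne_zero_of_ae_exists {Ω ι : Type*} [MeasurableSpace Ω]
    [Countable ι] {P : Measure Ω} [NeZero P] {p : ι → Ω → Prop} (h : ∀ᵐ ω ∂P, ∃ i, p i ω) :
    ∃ i, P {ω | p i ω} ≠ 0 := by
  by_contra! hnull
  have hnone : ∀ᵐ ω ∂P, ∀ i, ¬ p i ω :=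
    ae_all_iff.2 fun i => measure_eq_zero_iff_ae_notMem.1 (hnull i)
  have : (ae P).NeBot := ae_neBot.2 (NeZero.ne P)
  obtain ⟨ω, ⟨i, hi⟩, hω⟩ := (h.and hnone).exists
  exact hω i hi

theorem ProbabilityTheory.iIndepFun.strong_law_comp_injective {Ω ι : Type*}
    [MeasurableSpace Ω] {P : Measure Ω} {X : ι → Ω → ℝ} (hindep : iIndepFun X P)
    (hident : ∀ i j, IdentDistrib (X i) (X j) P P)
    (hint : ∀ i, Integrable (X i) P) {g : ℕ → ι} (hg : Function.Injective g) :
    ∀ᵐ ω ∂P, Tendsto (fun n : ℕ => (∑ k ∈ range n, X (g k) ω) / n) atTop (𝓝 P[X (g 0)]) :=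
  strong_law_ae_real (fun k => X (g k)) (hint (g 0))
    (fun _ _ hkl => hindep.indepFun (hg.ne hkl)) (fun k => hident (g k) (g 0))

theorem measurable_biSup_comap {Ω ι β : Type*} [mβ : MeasurableSpace β] (η : ι → Ω → β)
    {T : Set ι} {u : ι} (hu : u ∈ T) : Measurable[⨆ w ∈ T, mβ.comap (η w)] (η u) :=
  Measurable.of_comap_le (le_iSup₂ (f := fun w (_ : w ∈ T) => mβ.comap (η w)) u hu)

theorem measurableSet_setOf_forall_abs_sum_Ico_sub_le {Ω ι : Type*} (η : ι → Ω → ℝ)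
    {g : ℕ → ι} {T : Set ι} {K : ℕ} (hg : ∀ k ≥ K, g k ∈ T) (c δ : ℝ) :
    MeasurableSet[⨆ u ∈ T, MeasurableSpace.comap (η u) inferInstance]
      {ω | ∀ n : ℕ, |∑ k ∈ Ico K n, (η (g k) ω - c)| ≤ δ * n} := by
  let : MeasurableSpace Ω := ⨆ u ∈ T, MeasurableSpace.comap (η u) inferInstance
  simp only [ofPred_forall]
  refine MeasurableSet.iInter fun n => measurableSet_le ?_ measurable_const
  exact (Finset.measurable_sum _ fun k hk =>
    (measurable_biSup_comap η (hg k (mem_Ico.1 hk).1)).sub_const c).abs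

theorem ProbabilityTheory.iIndepFun.measure_biInter_preimage_inter_ne_zero
    {Ω ι β : Type*} [MeasurableSpace Ω] [mβ : MeasurableSpace β] {P : Measure Ω}
    {η : ι → Ω → β} (hmeas : ∀ u, Measurable (η u))
    (hindep : iIndepFun η P) {S : Finset ι} {s : ι → Set β} (hs : ∀ u ∈ S, MeasurableSet (s u))
    (hpos : ∀ u ∈ S, P (η u ⁻¹' s u) ≠ 0) {G : Set Ω}
    (hG : MeasurableSet[⨆ u ∈ (↑S : Set ι)ᶜ, mβ.comap (η u)] G) (hGpos : P G ≠ 0) :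
    P ((⋂ u ∈ S, η u ⁻¹' s u) ∩ G) ≠ 0 := by
  have hB : MeasurableSet[⨆ u ∈ (↑S : Set ι), mβ.comap (η u)] (⋂ u ∈ S, η u ⁻¹' s u) :=
    MeasurableSet.biInter S.countable_toSet fun u hu => measurable_biSup_comap η hu (hs u hu)
  rw [(Indep_iff _ _ _).1 (indep_biSup_compl (fun u => (hmeas u).comap_le) hindep.iIndep ↑S) _ _
    hB hG, hindep.meas_biInter fun u hu => ⟨_, hs u hu, rfl⟩]
  exact mul_ne_zero (prod_ne_zero_iff.2 hpos) hGpos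

section UniformLaw

variable {Ω : Type*} [MeasurableSpace Ω] {P : Measure Ω} {f : Ω → ℝ}

theorem integrable_of_map_eq_uniform_Icc (hf : Measurable f)
    (hlaw : P.map f = volume.restrict (Set.Icc 0 1)) : Integrable f P := by
  have hid : Integrable id (P.map f) := by
    rw [hlaw]
    exact continuous_id.continuousOn.integrableOn_compact isCompact_Icc
  exact (integrable_map_measure aestronglyMeasurable_id hf.aemeasurable).1 hid

theorem integral_eq_half_of_map_eq_uniform_Icc (hf : Measurable f)
    (hlaw : P.map f = volume.restrict (Set.Icc 0 1)) : ∫ ω, f ω ∂P = 1 / 2 := by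
  have hmap : ∫ ω, f ω ∂P = ∫ x, x ∂(P.map f) :=
    (integral_map hf.aemeasurable aestronglyMeasurable_id).symm
  rw [hmap, hlaw, integral_Icc_eq_integral_Ioc,
    ← intervalIntegral.integral_of_le zero_le_one, integral_id]
  norm_num

theorem measure_preimage_closedBall_half_ne_zero_of_map_eq_uniform_Icc (hf : Measurable f)
    (hlaw : P.map f = volume.restrict (Set.Icc 0 1)) {δ : ℝ} (hδ : 0 < δ) :
    P (f ⁻¹' Metric.closedBall (1 / 2) δ) ≠ 0 := by
  rw [← Measure.map_apply hf Metric.isClosed_closedBall.measurableSet, hlaw,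
    Measure.restrict_apply Metric.isClosed_closedBall.measurableSet]
  have hr : 0 < min δ (1 / 2) := lt_min hδ one_half_pos
  have hsub :
      Metric.ball (1 / 2 : ℝ) (min δ (1 / 2)) ⊆ Metric.closedBall (1 / 2) δ ∩ Set.Icc 0 1 := by
    intro x hx
    rw [Real.ball_eq_Ioo, Set.mem_Ioo] at hx
    rw [Real.closedBall_eq_Icc, Set.mem_inter_iff, Set.mem_Icc, Set.mem_Icc]
    have := min_le_left δ (1 / 2)
    have := min_le_right δ (1 / 2)
    refine ⟨⟨?_, ?_⟩, ?_, ?_⟩ <;> linarith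
  exact ((Metric.measure_ball_pos volume _ hr).trans_le (measure_mono hsub)).ne'

end UniformLaw

theorem ae_eventually_forall_abs_sum_Ico_sub_half_le {Ω ι : Type*} [MeasurableSpace Ω]
    {P : Measure Ω} {η : ι → Ω → ℝ} (hmeas : ∀ u, Measurable (η u)) (hindep : iIndepFun η P)
    (hunif : ∀ u, P.map (η u) = volume.restrict (Set.Icc 0 1)) {δ : ℝ} (hδ : 0 < δ)
    {g : ℕ → ι} (hg : Function.Injective g) :
    ∀ᵐ ω ∂P, ∀ᶠ K in atTop, ∀ n : ℕ, |∑ k ∈ Ico K n, (η (g k) ω - 1 / 2)| ≤ δ * n := by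
  have hident : ∀ u w, IdentDistrib (η u) (η w) P P := fun u w =>
    ⟨(hmeas u).aemeasurable, (hmeas w).aemeasurable, by rw [hunif, hunif]⟩
  filter_upwards [hindep.strong_law_comp_injective hident
    (fun u => integrable_of_map_eq_uniform_Icc (hmeas u) (hunif u)) hg] with ω hω
  rw [integral_eq_half_of_map_eq_uniform_Icc (hmeas _) (hunif _)] at hω
  exact eventually_forall_abs_sum_Ico_sub_le hδ hω

theorem two_sided_flat_positive_prob
    {Ω : Type*} [MeasurableSpace Ω] (P : Measure Ω) [IsProbabilityMeasure P]
    (η : ℤ → Ω → ℝ) (hmeas : ∀ u, Measurable (η u))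
    (hindep : iIndepFun η P)
    (hunif : ∀ u, Measure.map (η u) P = volume.restrict (Icc (0:ℝ) 1))
    (ε : ℝ) (hε : 0 < ε) (v : ℤ) :
    0 < P {ω | ∀ m n : ℕ,
        (∑ u ∈ Finset.Icc (v - m) (v + n), η u ω) / (m + n + 1)
          ∈ Icc (1/2 - ε) (1/2 + ε)} := by
  have hδ : 0 < ε / 2 := half_pos hε
  obtain ⟨K, htails⟩ := exists_measure_setOf_ne_zero_of_ae_exists (P := P) (ι := ℕ)
    (p := fun K ω => (∀ n : ℕ, |∑ k ∈ Ico K n, (η (v - 1 - k) ω - 1 / 2)| ≤ ε / 2 * n) ∧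
      ∀ n : ℕ, |∑ k ∈ Ico K n, (η (v + 1 + k) ω - 1 / 2)| ≤ ε / 2 * n) <| by
    filter_upwards [ae_eventually_forall_abs_sum_Ico_sub_half_le hmeas hindep hunif hδ
        (g := fun k : ℕ => v - 1 - k) fun k l h => by simpa using h,
      ae_eventually_forall_abs_sum_Ico_sub_half_le hmeas hindep hunif hδ
        (g := fun k : ℕ => v + 1 + k) fun k l h => by simpa using h] with ω hleft hright
    exact (hleft.and hright).exists
  have hpos := hindep.measure_biInter_preimage_inter_ne_zero hmeas
    (S := Finset.Icc (v - K) (v + K)) (fun _ _ => Metric.isClosed_closedBall.measurableSet)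
    (fun u _ =>
      measure_preimage_closedBall_half_ne_zero_of_map_eq_uniform_Icc (hmeas u) (hunif u) hδ)
    ((measurableSet_setOf_forall_abs_sum_Ico_sub_le η (fun k _ => by simp; omega) _ _).inter
      (measurableSet_setOf_forall_abs_sum_Ico_sub_le η (fun k _ => by simp; omega) _ _)) htails
  refine pos_iff_ne_zero.2 fun h0 => hpos (measure_mono_null ?_ h0)
  rintro ω ⟨hcentre, hleft, hright⟩ m n
  refine sum_Icc_div_mem_Icc_of_abs_sum_Ico_sub_le (x := (η · ω)) (fun u hu => ?_) hleft hright
    m n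
  simpa [Real.dist_eq] using mem_iInter₂.1 hcentre u hu
end

section
/- Let G be a connected graph where every vertex is within distance c of some vertex of degree at least 3, and let H = (v_1, v_2, ...) be a geodesic half-line in G (the distance from v_n to v_1 equals n-1). Then there exist distinct vertices u_1, u_2, ... outside H and a strictly increasing function f : ℕ → ℕ with (n-1)(2c+3)+3 ≤ f(n) ≤ n(2c+3) such that u_n is adjacent to v_{f(n)}, and ∑_{n=1}^∞ 1/f(n) = ∞; i.e., H can be made into a neighbor-rich half-line. -/
/-!
Walk from `v m` along a shortest path towards a vertex of degree at least `3` within distance `c`.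
Either the path leaves the half-line, and the last vertex `v k` before it does has a neighbour off
the half-line, or the whole path stays on it and ends at some `v k` of degree `≥ 3`, whose only
neighbours on a geodesic half-line are `v (k - 1)` and `v (k + 1)`. In both cases
`|k - m| ≤ dist (v k) (v m) ≤ c`. Centring `m` in consecutive windows of length `2c + 3` gives the
neighbours `u n` of `v (f n)`; the windows force `f` to jump by at least `3`, so distinct `n` get
distinct `u n` (two neighbours of one vertex are at distance `≤ 2`), and `f n ≤ (2c + 3) n` makes
`∑ 1 / f n` dominate a multiple of the harmonic series.
-/

open Filter Finset

namespace SimpleGraph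

variable {V : Type*} {G : SimpleGraph V}

theorem Reachable.exists_adj_notMem_of_dist_le {S : Set V} {x w : V} (hx : x ∈ S)
    (hxw : G.Reachable x w) (hw : w ∈ S → ∃ u, G.Adj w u ∧ u ∉ S) :
    ∃ a ∈ S, G.dist x a ≤ G.dist x w ∧ ∃ u, G.Adj a u ∧ u ∉ S := by
  classical
  by_cases hwS : w ∈ S
  · exact ⟨w, hwS, le_rfl, hw hwS⟩
  obtain ⟨p, hp⟩ := hxw.exists_walk_length_eq_dist
  obtain ⟨d, hd, hdS, hdS'⟩ := p.exists_boundary_dart S hx hwS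
  refine ⟨d.fst, hdS, ?_, d.snd, d.adj, hdS'⟩
  calc G.dist x d.fst
      ≤ (p.takeUntil d.fst (p.dart_fst_mem_support_of_mem_darts hd)).length := dist_le _
    _ ≤ p.length := p.length_takeUntil_le_length _
    _ = G.dist x w := hp

theorem exists_adj_notMem_of_card_lt_degree {w : V} [Fintype (G.neighborSet w)] (t : Finset V)
    (ht : t.card < G.degree w) : ∃ u, G.Adj w u ∧ u ∉ t := by
  obtain ⟨u, hu, hut⟩ := exists_mem_notMem_of_card_lt_card ht
  exact ⟨u, (mem_neighborFinset _ _ _).mp hu, hut⟩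

theorem le_add_dist_of_dist_eq (hconn : G.Connected) {v : ℕ → V}
    (hgeo : ∀ n, 1 ≤ n → G.dist (v n) (v 1) = n - 1) {a b : ℕ} (ha : 1 ≤ a) (hb : 1 ≤ b) :
    a ≤ b + G.dist (v a) (v b) := by
  have := hconn.dist_triangle (u := v a) (v := v b) (w := v 1)
  rw [hgeo a ha, hgeo b hb] at this
  omega

theorem eq_sub_one_or_eq_add_one_of_adj_of_dist_eq (hconn : G.Connected) {v : ℕ → V}
    (hgeo : ∀ n, 1 ≤ n → G.dist (v n) (v 1) = n - 1) {i j : ℕ} (hi : 1 ≤ i) (hj : 1 ≤ j)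
    (hij : G.Adj (v i) (v j)) : i = j - 1 ∨ i = j + 1 := by
  have hne : i ≠ j := fun h ↦ hij.ne (congrArg v h)
  have h₁ := le_add_dist_of_dist_eq hconn hgeo hi hj
  have h₂ := le_add_dist_of_dist_eq hconn hgeo hj hi
  rw [dist_eq_one_iff_adj.mpr hij] at h₁
  rw [dist_eq_one_iff_adj.mpr hij.symm] at h₂
  omega

theorem exists_adj_notMem_of_three_le_degree (hconn : G.Connected) {v : ℕ → V}
    (hgeo : ∀ n, 1 ≤ n → G.dist (v n) (v 1) = n - 1) {j : ℕ} [Fintype (G.neighborSet (v j))]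
    (hj : 1 ≤ j) (hdeg : 3 ≤ G.degree (v j)) : ∃ u, G.Adj (v j) u ∧ u ∉ v '' Set.Ici 1 := by
  classical
  have hcard : ({v (j - 1), v (j + 1)} : Finset V).card < G.degree (v j) :=
    card_le_two.trans_lt hdeg
  obtain ⟨u, hu, hut⟩ := exists_adj_notMem_of_card_lt_degree _ hcard
  refine ⟨u, hu, ?_⟩
  rintro ⟨i, hi, rfl⟩
  rcases eq_sub_one_or_eq_add_one_of_adj_of_dist_eq hconn hgeo hi hj hu.symm with rfl | rfl <;>
    simp at hut

theorem exists_adj_notMem_near (hconn : G.Connected) {c : ℕ} [∀ w, Fintype (G.neighborSet w)]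
    (hdeg : ∀ w, ∃ w', G.dist w w' ≤ c ∧ 3 ≤ G.degree w') {v : ℕ → V}
    (hgeo : ∀ n, 1 ≤ n → G.dist (v n) (v 1) = n - 1) {m : ℕ} (hm : 1 ≤ m) :
    ∃ k u, 1 ≤ k ∧ m ≤ k + c ∧ k ≤ m + c ∧ G.Adj (v k) u ∧ u ∉ v '' Set.Ici 1 := by
  obtain ⟨w, hdw, hw⟩ := hdeg (v m)
  have hwS : w ∈ v '' Set.Ici 1 → ∃ u, G.Adj w u ∧ u ∉ v '' Set.Ici 1 := by
    rintro ⟨j, hj, rfl⟩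
    exact exists_adj_notMem_of_three_le_degree hconn hgeo hj hw
  obtain ⟨_, ⟨k, hk, rfl⟩, hdk, u, hu, huS⟩ :=
    (hconn (v m) w).exists_adj_notMem_of_dist_le (S := v '' Set.Ici 1) ⟨m, hm, rfl⟩ hwS
  have h₁ := le_add_dist_of_dist_eq hconn hgeo hm hk
  have h₂ := le_add_dist_of_dist_eq hconn hgeo hk hm
  rw [dist_comm] at h₂
  exact ⟨k, u, hk, by omega, by omega, hu, huS⟩

theorem exists_adj_notMem_window (hconn : G.Connected) {c : ℕ} [∀ w, Fintype (G.neighborSet w)]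
    (hdeg : ∀ w, ∃ w', G.dist w w' ≤ c ∧ 3 ≤ G.degree w') {v : ℕ → V}
    (hgeo : ∀ n, 1 ≤ n → G.dist (v n) (v 1) = n - 1) (L : ℕ) :
    ∃ k u, L + 3 ≤ k ∧ k ≤ L + (2 * c + 3) ∧ G.Adj u (v k) ∧ u ∉ v '' Set.Ici 1 := by
  obtain ⟨k, u, -, h₁, h₂, hu, huS⟩ :=
    exists_adj_notMem_near hconn hdeg hgeo (m := L + c + 3) (by omega)
  exact ⟨k, u, by omega, by omega, hu.symm, huS⟩

theorem le_add_two_of_adj_of_dist_eq (hconn : G.Connected) {v : ℕ → V}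
    (hgeo : ∀ n, 1 ≤ n → G.dist (v n) (v 1) = n - 1) {i j : ℕ} (hi : 1 ≤ i) (hj : 1 ≤ j)
    {u : V} (hui : G.Adj u (v i)) (huj : G.Adj u (v j)) : i ≤ j + 2 := by
  have h := le_add_dist_of_dist_eq hconn hgeo hi hj
  have : G.dist (v i) (v j) ≤ 2 := by
    simpa using dist_le (hui.symm.toWalk.append huj.toWalk)
  omega

end SimpleGraph

theorem Nat.add_three_le_of_mem_window {f : ℕ → ℕ} {L : ℕ}
    (hf : ∀ n, 1 ≤ n → (n - 1) * L + 3 ≤ f n ∧ f n ≤ n * L) {a b : ℕ} (ha : 1 ≤ a) (hab : a < b) :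
    f a + 3 ≤ f b := by
  have h₁ := (hf a ha).2
  have h₂ := (hf b (by omega)).1
  have : a * L ≤ (b - 1) * L := Nat.mul_le_mul_right _ (by omega)
  omega

theorem tendsto_sum_Icc_one_div_atTop_of_le_mul {f : ℕ → ℕ} {C : ℕ}
    (hpos : ∀ n, 1 ≤ n → 0 < f n) (hle : ∀ n, 1 ≤ n → f n ≤ C * n) :
    Tendsto (fun k ↦ ∑ n ∈ Icc 1 k, (1 : ℝ) / f n) atTop atTop := by
  have hC : (0 : ℝ) < C := by
    exact_mod_cast (hpos 1 le_rfl).trans_le ((hle 1 le_rfl).trans_eq (mul_one C))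
  have hharm : Tendsto (fun k ↦ (C : ℝ)⁻¹ * ∑ n ∈ range k, (1 : ℝ) / (n + 1)) atTop atTop :=
    Real.tendsto_sum_range_one_div_nat_succ_atTop.const_mul_atTop (inv_pos.mpr hC)
  refine tendsto_atTop_mono (fun k ↦ ?_) hharm
  rw [mul_sum, ← Ico_add_one_right_eq_Icc, sum_Ico_eq_sum_range, Nat.add_sub_cancel]
  refine sum_le_sum fun n _ ↦ ?_
  have hfpos : (0 : ℝ) < f (1 + n) := by exact_mod_cast hpos (1 + n) (by omega)
  have hfn : (f (1 + n) : ℝ) ≤ (n + 1) * C := by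
    exact_mod_cast (hle (1 + n) (by omega)).trans_eq (by ring)
  rw [← div_eq_inv_mul, div_div]
  exact one_div_le_one_div_of_le hfpos hfn

theorem neighbor_rich_half_line_exists
    {V : Type*} (G : SimpleGraph V) [∀ w : V, Fintype (G.neighborSet w)]
    (hconn : G.Connected) (c : ℕ)
    (hdeg : ∀ w : V, ∃ w' : V, G.dist w w' ≤ c ∧ 3 ≤ G.degree w')
    (v : ℕ → V)
    (hadj : ∀ n : ℕ, 1 ≤ n → G.Adj (v n) (v (n + 1)))
    (hgeo : ∀ n : ℕ, 1 ≤ n → G.dist (v n) (v 1) = n - 1) :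
    ∃ (u : ℕ → V) (f : ℕ → ℕ),
      (∀ m n : ℕ, 1 ≤ m → 1 ≤ n → u m = u n → m = n) ∧
      (∀ n : ℕ, 1 ≤ n → u n ∉ v '' (Set.Ici 1)) ∧
      StrictMonoOn f (Set.Ici 1) ∧
      (∀ n : ℕ, 1 ≤ n → (n - 1) * (2 * c + 3) + 3 ≤ f n ∧ f n ≤ n * (2 * c + 3)) ∧
      (∀ n : ℕ, 1 ≤ n → G.Adj (u n) (v (f n))) ∧
      Tendsto (fun k => ∑ n ∈ Finset.Icc 1 k, (1 : ℝ) / (f n)) atTop atTop := by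
  choose f u hlow hhigh hnbr hu using
    fun n ↦ SimpleGraph.exists_adj_notMem_window hconn hdeg hgeo ((n - 1) * (2 * c + 3))
  have hwin : ∀ n, 1 ≤ n → (n - 1) * (2 * c + 3) + 3 ≤ f n ∧ f n ≤ n * (2 * c + 3) :=
    fun n hn ↦ ⟨hlow n, (hhigh n).trans_eq (by cases n <;> simp_all [add_mul])⟩
  have hgap : ∀ {a b}, 1 ≤ a → a < b → f a + 3 ≤ f b := Nat.add_three_le_of_mem_window hwin
  have hf1 : ∀ n, 1 ≤ n → 1 ≤ f n := fun n _ ↦ by have := hlow n; omega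
  have hclose : ∀ {a b}, 1 ≤ a → 1 ≤ b → u a = u b → f a ≤ f b + 2 := fun ha hb hab ↦
    SimpleGraph.le_add_two_of_adj_of_dist_eq hconn hgeo (hf1 _ ha) (hf1 _ hb) (hnbr _)
      (hab ▸ hnbr _)
  refine ⟨u, f, fun a b ha hb hab ↦ ?_, fun n _ ↦ hu n, fun a ha b _ hab ↦ ?_, hwin,
    fun n _ ↦ hnbr n, ?_⟩
  · by_contra hne
    rcases Nat.lt_or_gt_of_ne hne with h | h
    · have := hgap ha h; have := hclose hb ha hab.symm; omega
    · have := hgap hb h; have := hclose ha hb hab; omega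
  · have := hgap ha hab; omega
  · exact tendsto_sum_Icc_one_div_atTop_of_le_mul hf1 fun n hn ↦
      (hwin n hn).2.trans_eq (mul_comm _ _)
end

section
/- Duality of water transport and SAD: let G = (V,E) be a graph, η_0 : V → ℝ an initial profile, v ∈ V, and fix a move sequence of T updates (e_1, μ_1), ..., (e_T, μ_T) applied to η. Let (ξ_k) be the process started from ξ_0 = δ_v (the indicator of v) updated by the same rule but with edges and parameters in reversed order: at SAD-step T-k the edge e_k with parameter μ_k is used. Then η_T(v) = ∑_{u∈V} ξ_T(u)·η_0(u). -/
open Finset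

/-- One water-transport / SAD move along the edge `⟨x, y⟩` with parameter `μ`. -/
def waterUpdate {V : Type*} [DecidableEq V] (η : V → ℝ) (x y : V) (μ : ℝ) : V → ℝ :=
  fun u => if u = x then η x + μ * (η y - η x)
           else if u = y then η y + μ * (η x - η y)
           else η u

lemma waterUpdate_adjoint {V : Type*} [Fintype V] [DecidableEq V]
    (f g : V → ℝ) (x y : V) (μ : ℝ) :
    ∑ u : V, waterUpdate f x y μ u * g u = ∑ u : V, f u * waterUpdate g x y μ u := by
  rw [← sub_eq_zero, ← Finset.sum_sub_distrib]
  rcases eq_or_ne x y with h | h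
  · subst h
    apply Finset.sum_eq_zero
    intro u _
    unfold waterUpdate
    by_cases hu : u = x <;> simp [hu] <;> ring
  · have hz : ∀ u ∈ Finset.univ, u ∉ ({x, y} : Finset V) →
        waterUpdate f x y μ u * g u - f u * waterUpdate g x y μ u = 0 := by
      intro u _ hu
      simp only [Finset.mem_insert, Finset.mem_singleton, not_or] at hu
      unfold waterUpdate
      simp [hu.1, hu.2]
    rw [← Finset.sum_subset (Finset.subset_univ {x, y}) hz,
      Finset.sum_pair h]
    unfold waterUpdate
    simp [h, h.symm]
    ring

theorem water_transport_SAD_duality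
    {V : Type*} [Fintype V] [DecidableEq V] (G : SimpleGraph V) (v : V)
    (T : ℕ) (x y : ℕ → V) (μ : ℕ → ℝ)
    (hedge : ∀ k < T, G.Adj (x k) (y k))
    (hμ : ∀ k < T, 0 < μ k ∧ μ k ≤ 1/2)
    (η : ℕ → V → ℝ)
    (hη : ∀ k < T, η (k + 1) = waterUpdate (η k) (x k) (y k) (μ k))
    (ξ : ℕ → V → ℝ)
    (hξ0 : ξ 0 = fun u => if u = v then 1 else 0)
    (hξ : ∀ j < T, ξ (j + 1) =
        waterUpdate (ξ j) (x (T - 1 - j)) (y (T - 1 - j)) (μ (T - 1 - j))) :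
    η T v = ∑ u : V, ξ T u * η 0 u := by
  have key : ∀ j ≤ T, ∑ u : V, ξ j u * η (T - j) u = η T v := by
    intro j hj
    induction j with
    | zero =>
      simp [hξ0]
    | succ j ih =>
      have hjT : j < T := hj
      have h1 : ξ (j + 1) = waterUpdate (ξ j) (x (T - 1 - j)) (y (T - 1 - j)) (μ (T - 1 - j)) :=
        hξ j hjT
      have hk : T - 1 - j < T := by omega
      have h2 : η (T - 1 - j + 1) = waterUpdate (η (T - 1 - j)) (x (T - 1 - j)) (y (T - 1 - j)) (μ (T - 1 - j)) :=
        hη _ hk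
      have hTj : T - (j + 1) = T - 1 - j := by omega
      have hTj2 : T - j = T - 1 - j + 1 := by omega
      rw [h1, hTj, waterUpdate_adjoint, ← h2, ← hTj2, ih (le_of_lt hjT)]
  have := key T le_rfl
  simpa using this.symm
end

section
/- Consider the path on three vertices 1–2–3 with i.i.d. uniform(0,1) initial levels η(1), η(2), η(3), and let κ = max{η(1), (η(1)+η(2))/2, (η(1)+η(2)+η(3))/3}. Then for x ∈ [0, 1/3], P(κ ≤ x) = (8/3)x³. -/
/-!
For `x ≤ 1/3` the event `κ ≤ x` is `{a ≤ x, a + b ≤ 2x, a + b + c ≤ 3x}` for the levels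
`(a, b, c)`, a region of the unit cube on which the upper bounds `1` are never active. By
independence its probability is its volume, which Fubini (slicing off the first coordinate twice)
computes as `∫₀ˣ ∫₀^{2x-a} (3x - a - b) db da = 8x³/3`.
-/

open MeasureTheory ProbabilityTheory Set

lemma Set.Iic_inter_Icc_of_le {α : Type*} [LinearOrder α] {a b t : α} (h : t ≤ b) :
    Iic t ∩ Icc a b = Icc a t := by
  ext y
  simp only [mem_inter_iff, mem_Iic, mem_Icc]
  exact ⟨fun ⟨hy, ha, _⟩ ↦ ⟨ha, hy⟩, fun ⟨ha, hy⟩ ↦ ⟨hy, ha, hy.trans h⟩⟩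

lemma volume_restrict_unitInterval_Iic {t : ℝ} (ht : t ≤ 1) :
    volume.restrict (Icc (0:ℝ) 1) (Iic t) = ENNReal.ofReal t := by
  rw [Measure.restrict_apply measurableSet_Iic, Iic_inter_Icc_of_le ht, Real.volume_Icc,
    sub_zero]

lemma prod_volume_restrict_unitInterval_apply {β : Type*} [MeasurableSpace β] {ν : Measure β}
    [SFinite ν] {S : Set (ℝ × β)} (hS : MeasurableSet S) {f : ℝ → ℝ} {s : ℝ}
    (hf : Continuous f) (hf0 : ∀ a ∈ Icc 0 s, 0 ≤ f a) (hs0 : 0 ≤ s) (hs1 : s ≤ 1)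
    (hslice : ∀ a ∈ Icc (0:ℝ) 1,
      ν (Prod.mk a ⁻¹' S) = (Iic s).indicator (fun a ↦ ENNReal.ofReal (f a)) a) :
    ((volume.restrict (Icc (0:ℝ) 1)).prod ν) S = ENNReal.ofReal (∫ a in 0..s, f a) := by
  rw [Measure.prod_apply hS, setLIntegral_congr_fun measurableSet_Icc hslice,
    lintegral_indicator measurableSet_Iic, Measure.restrict_restrict measurableSet_Iic,
    Iic_inter_Icc_of_le hs1, intervalIntegral.integral_of_le hs0,
    ← integral_Icc_eq_integral_Ioc, ofReal_integral_eq_lintegral_ofReal hf.integrableOn_Icc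
      (ae_restrict_of_forall_mem measurableSet_Icc hf0)]

lemma prod_volume_restrict_unitInterval_trapezoid {s t : ℝ} (hs : 0 ≤ s) (hst : s ≤ t)
    (ht : t ≤ 1) :
    ((volume.restrict (Icc (0:ℝ) 1)).prod (volume.restrict (Icc (0:ℝ) 1)))
      {q : ℝ × ℝ | q.1 ≤ s ∧ q.1 + q.2 ≤ t} = ENNReal.ofReal (s * t - s ^ 2 / 2) := by
  have hS : MeasurableSet {q : ℝ × ℝ | q.1 ≤ s ∧ q.1 + q.2 ≤ t} :=
    (measurableSet_le measurable_fst measurable_const).inter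
      (measurableSet_le (measurable_fst.add measurable_snd) measurable_const)
  rw [prod_volume_restrict_unitInterval_apply hS (f := fun b ↦ t - b) (by fun_prop)
    (fun b hb ↦ by linarith [hb.2]) hs (hst.trans ht)]
  · rw [intervalIntegral.integral_sub intervalIntegrable_const
      intervalIntegral.intervalIntegrable_id]
    simp
  · intro b hb
    by_cases hbs : b ≤ s
    · have : Prod.mk b ⁻¹' {q : ℝ × ℝ | q.1 ≤ s ∧ q.1 + q.2 ≤ t} = Iic (t - b) := by
        ext c; simp only [mem_preimage, mem_ofPred_eq, mem_Iic]; constructor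
        · rintro ⟨-, h⟩; linarith
        · intro h; exact ⟨hbs, by linarith⟩
      rw [this, volume_restrict_unitInterval_Iic (by linarith [hb.1]),
        indicator_of_mem (mem_Iic.mpr hbs)]
    · have : Prod.mk b ⁻¹' {q : ℝ × ℝ | q.1 ≤ s ∧ q.1 + q.2 ≤ t} = ∅ :=
        eq_empty_of_forall_notMem fun c hc ↦ hbs hc.1
      rw [this, measure_empty, indicator_of_notMem (by simpa using hbs)]

lemma integral_threePathRegion_slice (x : ℝ) :
    ∫ a in (0:ℝ)..x, ((2 * x - a) * (3 * x - a) - (2 * x - a) ^ 2 / 2) = 8 / 3 * x ^ 3 := by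
  rw [intervalIntegral.integral_eq_sub_of_hasDerivAt
    (f := fun a ↦ 4 * x ^ 2 * a - 3 * x * a ^ 2 / 2 + a ^ 3 / 6)]
  · ring
  · intro a _
    refine ((((hasDerivAt_id' a).const_mul (4 * x ^ 2)).fun_sub
      (((hasDerivAt_pow 2 a).const_mul (3 * x)).div_const 2)).fun_add
      ((hasDerivAt_pow 3 a).div_const 6)).congr_deriv ?_
    push_cast
    ring
  · exact Continuous.intervalIntegrable (by fun_prop) _ _

def threePathRegion (x : ℝ) : Set (ℝ × ℝ × ℝ) :=
  {p : ℝ × ℝ × ℝ | p.1 ≤ x ∧ p.1 + p.2.1 ≤ 2 * x ∧ p.1 + p.2.1 + p.2.2 ≤ 3 * x}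

lemma measurableSet_threePathRegion (x : ℝ) : MeasurableSet (threePathRegion x) := by
  unfold threePathRegion
  measurability

lemma prod_volume_restrict_unitInterval_threePathRegion {x : ℝ} (hx0 : 0 ≤ x)
    (hx : x ≤ 1 / 3) :
    ((volume.restrict (Icc (0:ℝ) 1)).prod
      ((volume.restrict (Icc (0:ℝ) 1)).prod (volume.restrict (Icc (0:ℝ) 1))))
      (threePathRegion x) = ENNReal.ofReal (8 / 3 * x ^ 3) := by
  rw [← integral_threePathRegion_slice, prod_volume_restrict_unitInterval_apply
    (measurableSet_threePathRegion x)
    (f := fun a ↦ (2 * x - a) * (3 * x - a) - (2 * x - a) ^ 2 / 2) (by fun_prop)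
    (fun a ha ↦ by nlinarith [ha.2]) hx0 (by linarith)]
  intro a ha
  by_cases hax : a ≤ x
  · have : Prod.mk a ⁻¹' threePathRegion x =
        {q : ℝ × ℝ | q.1 ≤ 2 * x - a ∧ q.1 + q.2 ≤ 3 * x - a} := by
      ext q; simp only [threePathRegion, mem_preimage, mem_ofPred_eq]; constructor
      · rintro ⟨-, h₂, h₃⟩; constructor <;> linarith
      · rintro ⟨h₂, h₃⟩; exact ⟨hax, by linarith, by linarith⟩
    rw [this, prod_volume_restrict_unitInterval_trapezoid (by linarith) (by linarith)
      (by linarith [ha.1]), indicator_of_mem (mem_Iic.mpr hax)]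
  · have : Prod.mk a ⁻¹' threePathRegion x = ∅ :=
      eq_empty_of_forall_notMem fun q hq ↦ hax hq.1
    rw [this, measure_empty, indicator_of_notMem (by simpa using hax)]

lemma ProbabilityTheory.iIndepFun.map_fin_three_eq_prod {Ω β : Type*} [MeasurableSpace Ω]
    [MeasurableSpace β] {P : Measure Ω} [IsFiniteMeasure P] {η : Fin 3 → Ω → β}
    (hmeas : ∀ i, Measurable (η i)) (hindep : iIndepFun η P) :
    P.map (fun ω ↦ (η 0 ω, η 1 ω, η 2 ω)) =
      (P.map (η 0)).prod ((P.map (η 1)).prod (P.map (η 2))) := by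
  have h₁₂ : P.map (fun ω ↦ (η 1 ω, η 2 ω)) = (P.map (η 1)).prod (P.map (η 2)) :=
    (indepFun_iff_map_prod_eq_prod_map_map (hmeas 1).aemeasurable
      (hmeas 2).aemeasurable).mp (hindep.indepFun (by decide))
  rw [← h₁₂]
  exact (indepFun_iff_map_prod_eq_prod_map_map (hmeas 0).aemeasurable
    ((hmeas 1).prodMk (hmeas 2)).aemeasurable).mp
    (hindep.indepFun_prodMk hmeas 1 2 0 (by decide) (by decide)).symm

theorem cdf_three_path_endpoint
    {Ω : Type*} [MeasurableSpace Ω] (P : Measure Ω) [IsProbabilityMeasure P]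
    (η : Fin 3 → Ω → ℝ) (hmeas : ∀ i, Measurable (η i))
    (hindep : iIndepFun η P)
    (hunif : ∀ i, Measure.map (η i) P = volume.restrict (Icc (0:ℝ) 1)) :
    ∀ x ∈ Icc (0:ℝ) (1/3),
      P {ω | max (η 0 ω) (max ((η 0 ω + η 1 ω) / 2) ((η 0 ω + η 1 ω + η 2 ω) / 3)) ≤ x}
        = ENNReal.ofReal (8/3 * x^3) := by
  rintro x ⟨hx0, hx⟩
  have hevent :
      {ω | max (η 0 ω) (max ((η 0 ω + η 1 ω) / 2) ((η 0 ω + η 1 ω + η 2 ω) / 3)) ≤ x} =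
      (fun ω ↦ (η 0 ω, η 1 ω, η 2 ω)) ⁻¹' threePathRegion x := by
    ext ω
    simp only [threePathRegion, mem_ofPred_eq, mem_preimage, max_le_iff,
      div_le_iff₀ (two_pos : (0:ℝ) < 2), div_le_iff₀ (three_pos : (0:ℝ) < 3), mul_comm x]
  rw [hevent, ← Measure.map_apply ((hmeas 0).prodMk ((hmeas 1).prodMk (hmeas 2)))
    (measurableSet_threePathRegion x), hindep.map_fin_three_eq_prod hmeas, hunif 0, hunif 1,
    hunif 2]
  exact prod_volume_restrict_unitInterval_threePathRegion hx0 hx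
end
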